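/- (Theorem 1, robust H₂ state-feedback synthesis.) Suppose there exist symmetric positive definite matrices P₋, P₊ (n×n), Q (n_d×n_d), X (n_p×n_p), and matrices M (n_u×n), V (n×n) such that LMI(P₊,X,V,M) ≻ 0, LMI(P₋,X,V,M) ≻ 0, the block matrix [[Q, B1ᵀ],[B1, P₊ − P₋]] ≻ 0, and tr(Q) < γ². Then V is invertible and, setting F := M·V⁻¹, A_F := A + B2·F, C0F := C0 + D02·F, C1F := C1 + D12·F, the closed-loop state-space robust H₂ analysis conditions hold: for each P ∈ {P₋, P₊}, the matrix diag(P, X, I_{n_e}) − [[A_F, B0],[C0F, D00],[C1F, D10]]·diag(P, X)·[[A_F, B0],[C0F, D00],[C1F, D10]]ᵀ is positive definite, and moreover [[Q, B1ᵀ],[B1, P₊ − P₋]] ≻ 0 and tr(Q) < γ². -/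

import Mathlib

open Matrix

/-- Concatenation of five column blocks. -/
def col5 {m c1 c2 c3 c4 c5 : Type*}
    (M1 : Matrix m c1 ℝ) (M2 : Matrix m c2 ℝ) (M3 : Matrix m c3 ℝ)
    (M4 : Matrix m c4 ℝ) (M5 : Matrix m c5 ℝ) :
    Matrix m (((c1 ⊕ c2) ⊕ (c3 ⊕ c4)) ⊕ c5) ℝ :=
  fromCols (fromCols (fromCols M1 M2) (fromCols M3 M4)) M5

/-- A `5 × 5` block matrix assembled from its twenty-five blocks. -/
def blk55 {r1 r2 r3 r4 r5 c1 c2 c3 c4 c5 : Type*}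
    (M11 : Matrix r1 c1 ℝ) (M12 : Matrix r1 c2 ℝ) (M13 : Matrix r1 c3 ℝ)
    (M14 : Matrix r1 c4 ℝ) (M15 : Matrix r1 c5 ℝ)
    (M21 : Matrix r2 c1 ℝ) (M22 : Matrix r2 c2 ℝ) (M23 : Matrix r2 c3 ℝ)
    (M24 : Matrix r2 c4 ℝ) (M25 : Matrix r2 c5 ℝ)
    (M31 : Matrix r3 c1 ℝ) (M32 : Matrix r3 c2 ℝ) (M33 : Matrix r3 c3 ℝ)
    (M34 : Matrix r3 c4 ℝ) (M35 : Matrix r3 c5 ℝ)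
    (M41 : Matrix r4 c1 ℝ) (M42 : Matrix r4 c2 ℝ) (M43 : Matrix r4 c3 ℝ)
    (M44 : Matrix r4 c4 ℝ) (M45 : Matrix r4 c5 ℝ)
    (M51 : Matrix r5 c1 ℝ) (M52 : Matrix r5 c2 ℝ) (M53 : Matrix r5 c3 ℝ)
    (M54 : Matrix r5 c4 ℝ) (M55 : Matrix r5 c5 ℝ) :
    Matrix (((r1 ⊕ r2) ⊕ (r3 ⊕ r4)) ⊕ r5) (((c1 ⊕ c2) ⊕ (c3 ⊕ c4)) ⊕ c5) ℝ :=
  fromRows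
    (fromRows (fromRows (col5 M11 M12 M13 M14 M15) (col5 M21 M22 M23 M24 M25))
      (fromRows (col5 M31 M32 M33 M34 M35) (col5 M41 M42 M43 M44 M45)))
    (col5 M51 M52 M53 M54 M55)

/-- The `5 × 5` block LMI matrix `LMI(P, X, V, M)` of the robust `H₂` state-feedback
synthesis (Theorem 1), for the plant data `A, B0, B2, C0, D00, D02, C1, D10, D12`. -/
def LMIsf {n np ne nu : ℕ}
    (A : Matrix (Fin n) (Fin n) ℝ) (B0 : Matrix (Fin n) (Fin np) ℝ)
    (B2 : Matrix (Fin n) (Fin nu) ℝ) (C0 : Matrix (Fin np) (Fin n) ℝ)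
    (D00 : Matrix (Fin np) (Fin np) ℝ) (D02 : Matrix (Fin np) (Fin nu) ℝ)
    (C1 : Matrix (Fin ne) (Fin n) ℝ) (D10 : Matrix (Fin ne) (Fin np) ℝ)
    (D12 : Matrix (Fin ne) (Fin nu) ℝ)
    (P : Matrix (Fin n) (Fin n) ℝ) (X : Matrix (Fin np) (Fin np) ℝ)
    (V : Matrix (Fin n) (Fin n) ℝ) (M : Matrix (Fin nu) (Fin n) ℝ) :
    Matrix (((Fin n ⊕ Fin np) ⊕ (Fin n ⊕ Fin np)) ⊕ Fin ne)
      (((Fin n ⊕ Fin np) ⊕ (Fin n ⊕ Fin np)) ⊕ Fin ne) ℝ :=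
  blk55
    (Vᵀ + V - P) 0 (A * V + B2 * M)ᵀ (C0 * V + D02 * M)ᵀ (C1 * V + D12 * M)ᵀ
    0 X (X * B0ᵀ) (X * D00ᵀ) (X * D10ᵀ)
    (A * V + B2 * M) (B0 * X) P 0 0
    (C0 * V + D02 * M) (D00 * X) 0 X 0
    (C1 * V + D12 * M) (D10 * X) 0 0 (1 : Matrix (Fin ne) (Fin ne) ℝ)

/-!
Write `U = diag(V, X)`, `Π = diag(P, X)`, `R = diag(P, X, I)` and let `W` be the closed-loop
matrix of the feedback `F = M V⁻¹`. Since `A V + B₂ M = A_F V` (and likewise for `C₀`, `C₁`),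
the LMI is, up to regrouping the blocks, `[[Uᵀ + U − Π, (W U)ᵀ], [W U, R]] ≻ 0`.
Its top-left block gives `Vᵀ + V ≻ P ⪰ 0`, so `V` is invertible. With `K = U⁻¹ Π Wᵀ`, the
congruence by `[−K; I]` yields `R − W Π Wᵀ − (Wᵀ − K)ᵀ Π (Wᵀ − K) ≻ 0`, hence `R − W Π Wᵀ ≻ 0`.
-/

section BlockLMI

variable {ι κ : Type*} [Fintype ι] [Fintype κ] [DecidableEq ι] [DecidableEq κ]

theorem isUnit_of_posDef_transpose_add_sub {U P : Matrix κ κ ℝ} (hP : P.PosSemidef)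
    (h : (Uᵀ + U - P).PosDef) : IsUnit U := by
  have hsym : (Uᵀ + U).PosDef := by simpa using h.add_posSemidef hP
  rw [isUnit_iff_isUnit_det, isUnit_iff_ne_zero]
  intro hdet
  obtain ⟨v, hv, hUv⟩ := exists_mulVec_eq_zero_iff.2 hdet
  have hpos := hsym.dotProduct_mulVec_pos hv
  rw [star_trivial, add_mulVec, dotProduct_add, mulVec_transpose, dotProduct_comm,
    ← dotProduct_mulVec, hUv] at hpos
  simp at hpos

theorem posDef_sub_mul_mul_transpose_of_posDef_fromBlocks {U P : Matrix κ κ ℝ}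
    {W : Matrix ι κ ℝ} {R : Matrix ι ι ℝ} (hP : P.PosSemidef) (hU : IsUnit U)
    (h : (fromBlocks (Uᵀ + U - P) (W * U)ᵀ (W * U) R).PosDef) :
    (R - W * P * Wᵀ).PosDef := by
  set K := U⁻¹ * P * Wᵀ with hK
  have hUK : U * K = P * Wᵀ := by
    rw [hK, ← Matrix.mul_assoc, ← Matrix.mul_assoc,
      mul_nonsing_inv _ ((isUnit_iff_isUnit_det U).1 hU), Matrix.one_mul]
  have hPs : Pᵀ = P := hP.isHermitian
  set L : Matrix (κ ⊕ ι) ι ℝ := fromRows (-K) 1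
  have hL : Function.Injective L.mulVec := by
    intro x y hxy
    simpa [L, fromRows_mulVec] using congrArg (fun v => v ∘ Sum.inr) hxy
  have key : R - W * P * Wᵀ = Lᴴ * fromBlocks (Uᵀ + U - P) (W * U)ᵀ (W * U) R * L
      + (Wᵀ - K)ᴴ * P * (Wᵀ - K) := by
    have hKU : ∀ Z : Matrix κ ι ℝ, Kᵀ * (Uᵀ * Z) = W * (P * Z) := fun Z => by
      rw [← Matrix.mul_assoc, ← transpose_mul, hUK, transpose_mul, hPs, transpose_transpose,
        Matrix.mul_assoc]
    simp only [conjTranspose_eq_transpose_of_trivial, L, transpose_fromRows, Matrix.mul_assoc,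
      fromBlocks_mul_fromRows, fromCols_mul_fromRows, transpose_neg, transpose_sub, transpose_mul,
      transpose_one, transpose_transpose, Matrix.mul_add, Matrix.add_mul, Matrix.mul_sub,
      Matrix.sub_mul, Matrix.mul_neg, Matrix.neg_mul, Matrix.mul_one, Matrix.one_mul, hUK, hKU]
    abel
  rw [key]
  exact (h.conjTranspose_mul_mul_same hL).add_posSemidef (hP.conjTranspose_mul_mul_same _)

end BlockLMI

section LMIsf

variable {n np ne nu : ℕ}
    (A : Matrix (Fin n) (Fin n) ℝ) (B0 : Matrix (Fin n) (Fin np) ℝ)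
    (B2 : Matrix (Fin n) (Fin nu) ℝ) (C0 : Matrix (Fin np) (Fin n) ℝ)
    (D00 : Matrix (Fin np) (Fin np) ℝ) (D02 : Matrix (Fin np) (Fin nu) ℝ)
    (C1 : Matrix (Fin ne) (Fin n) ℝ) (D10 : Matrix (Fin ne) (Fin np) ℝ)
    (D12 : Matrix (Fin ne) (Fin nu) ℝ)

theorem LMIsf_mul_eq_submatrix_fromBlocks (P : Matrix (Fin n) (Fin n) ℝ)
    (X : Matrix (Fin np) (Fin np) ℝ) (V : Matrix (Fin n) (Fin n) ℝ)
    (F : Matrix (Fin nu) (Fin n) ℝ) (hX : Xᵀ = X) :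
    LMIsf A B0 B2 C0 D00 D02 C1 D10 D12 P X V (F * V) =
      (fromBlocks ((fromBlocks V 0 0 X)ᵀ + fromBlocks V 0 0 X - fromBlocks P 0 0 X)
        (fromRows (fromBlocks (A + B2 * F) B0 (C0 + D02 * F) D00) (fromCols (C1 + D12 * F) D10) *
          fromBlocks V 0 0 X)ᵀ
        (fromRows (fromBlocks (A + B2 * F) B0 (C0 + D02 * F) D00) (fromCols (C1 + D12 * F) D10) *
          fromBlocks V 0 0 X)
        (fromBlocks (fromBlocks P 0 0 X) 0 0 1)).submatrix
        (Equiv.sumAssoc _ _ _) (Equiv.sumAssoc _ _ _) := by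
  have hF : ∀ {m} (C : Matrix (Fin m) (Fin n) ℝ) (D : Matrix (Fin m) (Fin nu) ℝ),
      C * V + D * (F * V) = (C + D * F) * V := fun C D => by
    rw [Matrix.add_mul, Matrix.mul_assoc]
  simp only [LMIsf, hF]
  ext (((i | i) | (i | i)) | i) (((j | j) | (j | j)) | j) <;>
    simp [blk55, col5, fromRows_mul, fromBlocks_multiply, fromCols_mul_fromBlocks,
      transpose_fromRows, transpose_fromCols, fromBlocks_transpose, hX]

theorem isUnit_and_posDef_closedLoop_of_posDef_LMIsf {P : Matrix (Fin n) (Fin n) ℝ}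
    {X : Matrix (Fin np) (Fin np) ℝ} {V : Matrix (Fin n) (Fin n) ℝ}
    {M : Matrix (Fin nu) (Fin n) ℝ} (hP : P.PosSemidef) (hX : X.PosDef)
    (h : (LMIsf A B0 B2 C0 D00 D02 C1 D10 D12 P X V M).PosDef) :
    IsUnit V ∧
    (fromBlocks (fromBlocks P 0 0 X) 0 0 (1 : Matrix (Fin ne) (Fin ne) ℝ) -
      fromRows (fromBlocks (A + B2 * (M * V⁻¹)) B0 (C0 + D02 * (M * V⁻¹)) D00)
          (fromCols (C1 + D12 * (M * V⁻¹)) D10) *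
        fromBlocks P 0 0 X *
        (fromRows (fromBlocks (A + B2 * (M * V⁻¹)) B0 (C0 + D02 * (M * V⁻¹)) D00)
          (fromCols (C1 + D12 * (M * V⁻¹)) D10))ᵀ).PosDef := by
  have hV : IsUnit V := isUnit_of_posDef_transpose_add_sub hP <|
    h.submatrix (e := Sum.inl ∘ Sum.inl ∘ Sum.inl)
      (Sum.inl_injective.comp (Sum.inl_injective.comp Sum.inl_injective))
  have hPX : (fromBlocks P 0 0 X).PosSemidef := by
    have := hX.isUnit.invertible
    simpa using (PosDef.fromBlocks₂₂ P 0 hX).2 (by simpa using hP)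
  rw [← nonsing_inv_mul_cancel_right V M ((isUnit_iff_isUnit_det V).1 hV),
    LMIsf_mul_eq_submatrix_fromBlocks A B0 B2 C0 D00 D02 C1 D10 D12 P X V _ hX.isHermitian] at h
  exact ⟨hV, posDef_sub_mul_mul_transpose_of_posDef_fromBlocks hPX
    (isUnit_fromBlocks_zero₂₁.2 ⟨hV, hX.isUnit⟩)
    (by simpa using h.submatrix (Equiv.sumAssoc _ _ _).symm.injective)⟩

end LMIsf

theorem statement6_general {n np nd ne nu : ℕ}
    (A : Matrix (Fin n) (Fin n) ℝ) (B0 : Matrix (Fin n) (Fin np) ℝ)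
    (B1 : Matrix (Fin n) (Fin nd) ℝ) (B2 : Matrix (Fin n) (Fin nu) ℝ)
    (C0 : Matrix (Fin np) (Fin n) ℝ) (D00 : Matrix (Fin np) (Fin np) ℝ)
    (D02 : Matrix (Fin np) (Fin nu) ℝ)
    (C1 : Matrix (Fin ne) (Fin n) ℝ) (D10 : Matrix (Fin ne) (Fin np) ℝ)
    (D12 : Matrix (Fin ne) (Fin nu) ℝ)
    (Pm Pp : Matrix (Fin n) (Fin n) ℝ) (Q : Matrix (Fin nd) (Fin nd) ℝ)
    (X : Matrix (Fin np) (Fin np) ℝ)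
    (M : Matrix (Fin nu) (Fin n) ℝ) (V : Matrix (Fin n) (Fin n) ℝ) (γ : ℝ)
    (hPm : Pm.PosDef) (hPp : Pp.PosDef) (hX : X.PosDef)
    (hp : (LMIsf A B0 B2 C0 D00 D02 C1 D10 D12 Pp X V M).PosDef)
    (hm : (LMIsf A B0 B2 C0 D00 D02 C1 D10 D12 Pm X V M).PosDef)
    (hc : (fromBlocks Q B1ᵀ B1 (Pp - Pm)).PosDef)
    (htr : Q.trace < γ ^ 2) :
    IsUnit V ∧
    (fromBlocks (fromBlocks Pm 0 0 X) 0 0 (1 : Matrix (Fin ne) (Fin ne) ℝ) -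
      fromRows (fromBlocks (A + B2 * (M * V⁻¹)) B0 (C0 + D02 * (M * V⁻¹)) D00)
          (fromCols (C1 + D12 * (M * V⁻¹)) D10) *
        fromBlocks Pm 0 0 X *
        (fromRows (fromBlocks (A + B2 * (M * V⁻¹)) B0 (C0 + D02 * (M * V⁻¹)) D00)
          (fromCols (C1 + D12 * (M * V⁻¹)) D10))ᵀ).PosDef ∧
    (fromBlocks (fromBlocks Pp 0 0 X) 0 0 (1 : Matrix (Fin ne) (Fin ne) ℝ) -
      fromRows (fromBlocks (A + B2 * (M * V⁻¹)) B0 (C0 + D02 * (M * V⁻¹)) D00)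
          (fromCols (C1 + D12 * (M * V⁻¹)) D10) *
        fromBlocks Pp 0 0 X *
        (fromRows (fromBlocks (A + B2 * (M * V⁻¹)) B0 (C0 + D02 * (M * V⁻¹)) D00)
          (fromCols (C1 + D12 * (M * V⁻¹)) D10))ᵀ).PosDef ∧
    (fromBlocks Q B1ᵀ B1 (Pp - Pm)).PosDef ∧
    Q.trace < γ ^ 2 := by
  obtain ⟨hV, hclm⟩ := isUnit_and_posDef_closedLoop_of_posDef_LMIsf
    A B0 B2 C0 D00 D02 C1 D10 D12 hPm.posSemidef hX hm
  exact ⟨hV, hclm, (isUnit_and_posDef_closedLoop_of_posDef_LMIsf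
    A B0 B2 C0 D00 D02 C1 D10 D12 hPp.posSemidef hX hp).2, hc, htr⟩

/-- Theorem 1 (robust `H₂` state-feedback synthesis).  If there exist symmetric positive
definite `P₋, P₊, Q, X` and matrices `M, V` with `LMI(P₊,X,V,M) ≻ 0`, `LMI(P₋,X,V,M) ≻ 0`,
`[[Q, B₁ᵀ],[B₁, P₊ − P₋]] ≻ 0` and `tr(Q) < γ²`, then `V` is invertible and, with
`F := M·V⁻¹`, `A_F := A + B₂F`, `C₀F := C₀ + D₀₂F`, `C₁F := C₁ + D₁₂F`, the closed-loop
robust `H₂` analysis conditions hold for both `P₋` and `P₊`, together with the coupling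
condition and the trace bound. -/
theorem statement6 {n np nd ne nu : ℕ}
    (A : Matrix (Fin n) (Fin n) ℝ) (B0 : Matrix (Fin n) (Fin np) ℝ)
    (B1 : Matrix (Fin n) (Fin nd) ℝ) (B2 : Matrix (Fin n) (Fin nu) ℝ)
    (C0 : Matrix (Fin np) (Fin n) ℝ) (D00 : Matrix (Fin np) (Fin np) ℝ)
    (D02 : Matrix (Fin np) (Fin nu) ℝ)
    (C1 : Matrix (Fin ne) (Fin n) ℝ) (D10 : Matrix (Fin ne) (Fin np) ℝ)
    (D12 : Matrix (Fin ne) (Fin nu) ℝ)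
    (Pm Pp : Matrix (Fin n) (Fin n) ℝ) (Q : Matrix (Fin nd) (Fin nd) ℝ)
    (X : Matrix (Fin np) (Fin np) ℝ)
    (M : Matrix (Fin nu) (Fin n) ℝ) (V : Matrix (Fin n) (Fin n) ℝ) (γ : ℝ)
    (hγ : 0 < γ) (hPm : Pm.PosDef) (hPp : Pp.PosDef) (hQ : Q.PosDef) (hX : X.PosDef)
    (hp : (LMIsf A B0 B2 C0 D00 D02 C1 D10 D12 Pp X V M).PosDef)
    (hm : (LMIsf A B0 B2 C0 D00 D02 C1 D10 D12 Pm X V M).PosDef)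
    (hc : (fromBlocks Q B1ᵀ B1 (Pp - Pm)).PosDef)
    (htr : Q.trace < γ ^ 2) :
    IsUnit V ∧
    (fromBlocks (fromBlocks Pm 0 0 X) 0 0 (1 : Matrix (Fin ne) (Fin ne) ℝ) -
      fromRows (fromBlocks (A + B2 * (M * V⁻¹)) B0 (C0 + D02 * (M * V⁻¹)) D00)
          (fromCols (C1 + D12 * (M * V⁻¹)) D10) *
        fromBlocks Pm 0 0 X *
        (fromRows (fromBlocks (A + B2 * (M * V⁻¹)) B0 (C0 + D02 * (M * V⁻¹)) D00)
          (fromCols (C1 + D12 * (M * V⁻¹)) D10))ᵀ).PosDef ∧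
    (fromBlocks (fromBlocks Pp 0 0 X) 0 0 (1 : Matrix (Fin ne) (Fin ne) ℝ) -
      fromRows (fromBlocks (A + B2 * (M * V⁻¹)) B0 (C0 + D02 * (M * V⁻¹)) D00)
          (fromCols (C1 + D12 * (M * V⁻¹)) D10) *
        fromBlocks Pp 0 0 X *
        (fromRows (fromBlocks (A + B2 * (M * V⁻¹)) B0 (C0 + D02 * (M * V⁻¹)) D00)
          (fromCols (C1 + D12 * (M * V⁻¹)) D10))ᵀ).PosDef ∧
    (fromBlocks Q B1ᵀ B1 (Pp - Pm)).PosDef ∧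
    Q.trace < γ ^ 2 :=
  statement6_general A B0 B1 B2 C0 D00 D02 C1 D10 D12 Pm Pp Q X M V γ hPm hPp hX hp hm hc htr
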